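/- Let β₀ be the 1-periodic step function with β₀(t) = 1 for t ∈ [0, 1/2) and β₀(t) = −1 for t ∈ [1/2, 1), and R_sβ₀ the translate u ↦ β₀(u + s). Then: (a) the family {R_tβ₀ : t ∈ [0, 1/2)} is linearly independent in the vector space of functions ℝ → ℝ; and (b) every 1-periodic, right-continuous, S¹-odd function γ : ℝ → ℝ that is locally constant on ℝ ∖ (F + ℤ) for some finite set F ⊆ [0,1) can be written as a finite linear combination γ = Σ_j ξ_j · R_{t_j}β₀ with distinct t_j ∈ [0, 1/2) and ξ_j ∈ ℝ. -/

import Mathlib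

/-- The set `F + ℤ = {f + k : f ∈ F, k ∈ ℤ}` of integer translates of points of `F`. -/
def BreaksSet (F : Set ℝ) : Set ℝ := {x : ℝ | ∃ f ∈ F, ∃ k : ℤ, x = f + k}

/-- The 1-periodic step function equal to `1` on `[0, 1/2) + ℤ` and `-1` on `[1/2, 1) + ℤ`. -/
noncomputable def stepLoop : ℝ → ℝ := fun t => if Int.fract t < 1/2 then 1 else -1

/-!
Independence: among the translates `R_s`, `s ∈ [0, 1/2)`, only `R_t` jumps at `1/2 - t`, so
comparing a vanishing combination just left of `1/2 - t` with its value there kills the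
coefficient of `R_t`.

Representation: `γ` and every combination of translates are `1/2`-antiperiodic, so it suffices to
match `γ` on `[0, 1/2)`. There `γ` is a right-continuous step function with finitely many jumps;
subtracting a multiple of the indicator of `[m, ∞)` removes the rightmost jump `m`, so by induction
`γ` is a combination of such indicators, and on `[0, 1/2)` the indicator of `[d, ∞)` is
`(R_0 - R_{1/2 - d}) / 2`.
-/

open Set Filter Topology Function

section OrderTopology

variable {α : Type*} [LinearOrder α] [TopologicalSpace α] [OrderClosedTopology α]

lemma eventually_le_iff_nhds {x m : α} (h : x ≠ m) : ∀ᶠ y in 𝓝 x, (m ≤ y ↔ m ≤ x) := by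
  rcases h.lt_or_gt with h | h
  · filter_upwards [eventually_lt_nhds h] with y hy
    simp [hy.not_ge, h.not_ge]
  · filter_upwards [eventually_gt_nhds h] with y hy
    simp [hy.le, h.le]

lemma eventually_le_iff_nhdsGE (x m : α) : ∀ᶠ y in 𝓝[≥] x, (m ≤ y ↔ m ≤ x) := by
  by_cases h : m ≤ x
  · filter_upwards [self_mem_nhdsWithin] with y (hy : x ≤ y)
    simp [h, h.trans hy]
  · exact nhdsWithin_le_nhds (eventually_le_iff_nhds fun hx => h hx.ge)

lemma continuousWithinAt_indicator_Ici_one {M : Type*} [TopologicalSpace M] [Zero M] [One M]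
    (m x : α) : ContinuousWithinAt ((Ici m).indicator (1 : α → M)) (Ici x) x := by
  refine continuousWithinAt_const.congr_of_eventuallyEq ?_ rfl
  filter_upwards [eventually_le_iff_nhdsGE x m] with y hy
  simp only [indicator_apply, mem_Ici, hy, Pi.one_apply]

end OrderTopology

theorem LinearIndependent.of_eventually_ne {ι X K : Type*} [Ring K] [NoZeroDivisors K]
    {f : ι → X → K} (l : ι → Filter X) [∀ i, (l i).NeBot] (x : ι → X)
    (hself : ∀ i, ∀ᶠ y in l i, f i y ≠ f i (x i))
    (hother : ∀ i j, j ≠ i → ∀ᶠ y in l i, f j y = f j (x i)) : LinearIndependent K f := by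
  classical
  rw [linearIndependent_iff']
  intro s g hg i hi
  obtain ⟨y, hyi, hyj⟩ := ((hself i).and <| (s.erase i).eventually_all.2 fun j hj =>
    hother i j (Finset.ne_of_mem_erase hj)).exists
  have hsum : ∑ j ∈ s, g j * (f j y - f j (x i)) = 0 := by
    simpa [mul_sub, Finset.sum_sub_distrib, Finset.sum_apply] using
      congr_arg₂ (· - ·) (congr_fun hg y) (congr_fun hg (x i))
  rw [Finset.sum_eq_single_of_mem i hi fun j hj hji => by
    rw [hyj j (Finset.mem_erase.2 ⟨hji, hj⟩), sub_self, mul_zero]] at hsum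
  exact (mul_eq_zero.1 hsum).resolve_right (sub_ne_zero.2 hyi)

theorem Submodule.exists_fin_injective_of_mem_span_range {R M ι : Type*} [Semiring R]
    [AddCommMonoid M] [Module R M] {v : ι → M} {x : M} (hx : x ∈ span R (range v)) :
    ∃ (m : ℕ) (e : Fin m → ι) (ξ : Fin m → R), Injective e ∧ x = ∑ j, ξ j • v (e j) := by
  obtain ⟨c, rfl⟩ := Finsupp.mem_span_range_iff_exists_finsupp.1 hx
  refine ⟨c.support.card, fun j => c.support.equivFin.symm j,
    fun j => c (c.support.equivFin.symm j),
    Subtype.val_injective.comp c.support.equivFin.symm.injective, ?_⟩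
  rw [Finsupp.sum, ← Finset.sum_coe_sort]
  exact (Equiv.sum_comp c.support.equivFin.symm fun i => c i • v i).symm

theorem Function.Antiperiodic.eq_of_eqOn_Ico {β : Type*} [AddCommGroup β] {f g : ℝ → β} {c : ℝ}
    (hf : Antiperiodic f c) (hg : Antiperiodic g c) (hc : 0 < c) (hfg : EqOn f g (Ico 0 c)) :
    f = g := by
  have hh : Antiperiodic (f - g) c := fun x => by
    rw [Pi.sub_apply, Pi.sub_apply, hf x, hg x, neg_sub_neg, neg_sub]
  suffices ∀ x, (f - g) x = 0 from funext fun x => sub_eq_zero.1 (this x)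
  intro x
  obtain ⟨y, hy, hxy⟩ := hh.periodic_two_mul.exists_mem_Ico₀ (by positivity) x
  rw [hxy]
  rcases lt_or_ge y c with h | h
  · exact sub_eq_zero.2 (hfg ⟨hy.1, h⟩)
  · rw [← sub_add_cancel y c, hh, neg_eq_zero]
    exact sub_eq_zero.2 (hfg ⟨sub_nonneg.2 h, by linarith [hy.2]⟩)

lemma eqOn_const_Ico_of_continuousWithinAt {E : Type*} [NormedAddCommGroup E] [NormedSpace ℝ E]
    {γ : ℝ → E} {a b : ℝ} (ha : ContinuousWithinAt γ (Ici a) a)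
    (hloc : ∀ x ∈ Ioo a b, ∀ᶠ y in 𝓝 x, γ y = γ x) : EqOn γ (fun _ => γ a) (Ico a b) := by
  intro y hy
  rcases hy.1.eq_or_lt with rfl | hay
  · rfl
  have hderiv : ∀ x ∈ Ioo a b, HasDerivAt γ 0 x := fun x hx =>
    (hasDerivAt_const x (γ x)).congr_of_eventuallyEq (hloc x hx)
  have hconst : ∀ x ∈ Ioo a b, γ x = γ y := fun x hx =>
    isOpen_Ioo.is_const_of_deriv_eq_zero isPreconnected_Ioo
      (fun x hx => (hderiv x hx).differentiableAt.differentiableWithinAt)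
      (fun x hx => (hderiv x hx).deriv) hx ⟨hay, hy.2⟩
  have hlim : Tendsto γ (𝓝[>] a) (𝓝 (γ y)) :=
    tendsto_const_nhds.congr' <| eventuallyEq_of_mem (Ioo_mem_nhdsGT (hay.trans hy.2))
      fun x hx => (hconst x hx).symm
  exact (tendsto_nhds_unique (ha.mono Ioi_subset_Ici_self) hlim).symm

lemma eqOn_Ico_sub_smul_indicator_Ici {γ : ℝ → ℝ} {c m b : ℝ}
    (hc : ContinuousWithinAt γ (Ici c) c) (hm : ContinuousWithinAt γ (Ici m) m)
    (hcmb : m ∈ Ioo c b) (hloc : ∀ x ∈ Ioo c b, x ≠ m → ∀ᶠ y in 𝓝 x, γ y = γ x) :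
    EqOn (γ - (γ m - γ c) • (Ici m).indicator 1) (fun _ => γ c) (Ico c b) := by
  intro z hz
  rcases lt_or_ge z m with h | h
  · have hγz := eqOn_const_Ico_of_continuousWithinAt hc (b := m)
      (fun x hx => hloc x ⟨hx.1, hx.2.trans hcmb.2⟩ hx.2.ne) ⟨hz.1, h⟩
    simp [hγz, h.not_ge]
  · have hγz := eqOn_const_Ico_of_continuousWithinAt hm (b := b)
      (fun x hx => hloc x ⟨hcmb.1.trans hx.1, hx.2⟩ hx.1.ne') ⟨h, hz.2⟩
    simp [hγz, h]

theorem exists_mem_span_indicator_Ici_eqOn (S : Finset ℝ) {a b : ℝ} (hS : ∀ x ∈ S, x ∈ Ioo a b)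
    {γ : ℝ → ℝ} (hright : ∀ x ∈ Ico a b, ContinuousWithinAt γ (Ici x) x)
    (hloc : ∀ x ∈ Ioo a b, x ∉ S → ∀ᶠ y in 𝓝 x, γ y = γ x) :
    ∃ g ∈ Submodule.span ℝ (range fun d : ℝ => (Ici d).indicator (1 : ℝ → ℝ)),
      EqOn γ g (Ico a b) := by
  induction S using Finset.induction_on_max generalizing γ with
  | empty =>
    refine ⟨γ a • (Ici a).indicator 1, Submodule.smul_mem _ _ (Submodule.subset_span ⟨a, rfl⟩),
      fun y hy => ?_⟩
    rw [eqOn_const_Ico_of_continuousWithinAt (hright a ⟨le_rfl, hy.1.trans_lt hy.2⟩)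
      (fun x hx => hloc x hx (Finset.notMem_empty x)) hy]
    simp [hy.1]
  | insert m S hlt ih =>
    have hm := hS m (Finset.mem_insert_self m S)
    set c := (insert a S).max' (Finset.insert_nonempty a S)
    have hac : a ≤ c := Finset.le_max' _ _ (Finset.mem_insert_self a S)
    have hcm : c < m := (Finset.max'_lt_iff _ _).2 <| by
      simpa only [Finset.forall_mem_insert] using ⟨hm.1, hlt⟩
    set ind := (Ici m).indicator (1 : ℝ → ℝ)
    set J := γ m - γ c
    have hjump : EqOn (γ - J • ind) (fun _ => γ c) (Ico c b) :=
      eqOn_Ico_sub_smul_indicator_Ici (hright c ⟨hac, hcm.trans hm.2⟩) (hright m ⟨hm.1.le, hm.2⟩)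
        ⟨hcm, hm.2⟩ fun x hx hxm => hloc x ⟨hac.trans_lt hx.1, hx.2⟩ fun hxS =>
          (Finset.mem_insert.1 hxS).elim hxm
            fun hxS => (Finset.le_max' _ x (Finset.mem_insert_of_mem hxS)).not_gt hx.1
    obtain ⟨g, hg, hγg⟩ := ih (fun x hx => hS x (Finset.mem_insert_of_mem hx)) (γ := γ - J • ind)
      (fun x hx => (hright x hx).sub ((continuousWithinAt_indicator_Ici_one m x).const_smul J))
      (fun x hx hxS => by
        by_cases hxm : x = m
        · subst hxm
          filter_upwards [Ioo_mem_nhds hcm hm.2] with y hy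
          rw [hjump ⟨hy.1.le, hy.2⟩, hjump ⟨hcm.le, hm.2⟩]
        · filter_upwards [hloc x hx (by simp [hxm, hxS]), eventually_le_iff_nhds hxm]
            with y hγy hiff
          simp [ind, indicator_apply, hγy, hiff])
    refine ⟨g + J • ind, add_mem hg (Submodule.smul_mem _ _ (Submodule.subset_span ⟨m, rfl⟩)),
      fun y hy => ?_⟩
    have := hγg hy
    simp only [Pi.sub_apply, Pi.smul_apply, smul_eq_mul, Pi.add_apply] at this ⊢
    linarith

lemma stepLoop_eq_ite {x : ℝ} (h₀ : 0 ≤ x) (h₁ : x < 1) :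
    stepLoop x = if x < 1/2 then 1 else -1 := by
  rw [stepLoop, Int.fract_eq_self.2 ⟨h₀, h₁⟩]

lemma stepLoop_periodic : Periodic stepLoop 1 := fun x => by
  simp only [stepLoop, Int.fract_add_one]

lemma stepLoop_antiperiodic : Antiperiodic stepLoop (1/2) := by
  intro x
  have hfract : ∀ z : ℝ, stepLoop z = stepLoop (Int.fract z) := fun z => by
    simp only [stepLoop, Int.fract_fract]
  have h₀ := Int.fract_nonneg x
  have h₁ := Int.fract_lt_one x
  have hshift : Int.fract (x + 1/2) = Int.fract (Int.fract x + 1/2) := by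
    rw [← Int.fract_add_floor x, add_right_comm, Int.fract_add_intCast, Int.fract_add_floor]
  rw [hfract (x + 1/2), hshift, ← hfract, hfract x]
  rcases lt_or_ge (Int.fract x) (1/2) with h | h
  · rw [stepLoop_eq_ite (by linarith) (by linarith), stepLoop_eq_ite h₀ h₁, if_neg (by linarith),
      if_pos h]
  · rw [← sub_add_cancel (Int.fract x + 1/2) 1, stepLoop_periodic,
      stepLoop_eq_ite (by linarith) (by linarith), stepLoop_eq_ite h₀ h₁, if_pos (by linarith),
      if_neg (by linarith)]
    norm_num

lemma stepLoop_eventuallyEq {x : ℝ} (hx : x ∈ Ioo 0 1) (hx' : x ≠ 1/2) :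
    ∀ᶠ y in 𝓝 x, stepLoop y = stepLoop x := by
  filter_upwards [Ioo_mem_nhds hx.1 hx.2, eventually_le_iff_nhds hx'] with y hy hiff
  rw [stepLoop_eq_ite hy.1.le hy.2, stepLoop_eq_ite hx.1.le hx.2]
  simp only [← not_le, hiff]

noncomputable def stepLoopTranslate (s : Ico (0:ℝ) (1/2)) : ℝ → ℝ := fun u => stepLoop (u + s)

theorem linearIndependent_stepLoopTranslate : LinearIndependent ℝ stepLoopTranslate := by
  refine .of_eventually_ne (fun s => 𝓝[<] (1/2 - s)) (fun s => 1/2 - s) (fun s => ?_)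
    (fun s t hts => ?_)
  · obtain ⟨hs₀, hs₁⟩ := s.2
    filter_upwards [Ioo_mem_nhdsLT (show -(s:ℝ) < 1/2 - s by linarith)] with y hy
    simp only [stepLoopTranslate, sub_add_cancel]
    rw [stepLoop_eq_ite (by linarith [hy.1]) (by linarith [hy.2]),
      stepLoop_eq_ite (by norm_num) (by norm_num), if_pos (by linarith [hy.2])]
    norm_num
  · obtain ⟨hs₀, hs₁⟩ := s.2
    obtain ⟨ht₀, ht₁⟩ := t.2
    have hne : (t:ℝ) ≠ s := Subtype.val_injective.ne hts
    refine nhdsWithin_le_nhds <| ((continuous_add_const (t:ℝ)).tendsto _).eventually <|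
      stepLoop_eventuallyEq ⟨by linarith, by linarith⟩ fun h => hne ?_
    linarith

lemma exists_mem_span_stepLoopTranslate_eqOn {g : ℝ → ℝ}
    (hg : g ∈ Submodule.span ℝ (range fun d : ℝ => (Ici d).indicator (1 : ℝ → ℝ))) :
    ∃ g' ∈ Submodule.span ℝ (range stepLoopTranslate), EqOn g g' (Ico 0 (1/2)) := by
  have hR : ∀ t (ht : t ∈ Ico (0:ℝ) (1/2)),
      stepLoopTranslate ⟨t, ht⟩ ∈ Submodule.span ℝ (range stepLoopTranslate) :=
    fun t ht => Submodule.subset_span ⟨⟨t, ht⟩, rfl⟩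
  have hR₀ : ∀ u ∈ Ico (0:ℝ) (1/2), stepLoopTranslate ⟨0, by norm_num⟩ u = 1 := fun u hu => by
    simp only [stepLoopTranslate, add_zero, stepLoop_eq_ite hu.1 (by linarith [hu.2]), if_pos hu.2]
  induction hg using Submodule.span_induction with
  | mem _ hd =>
    obtain ⟨d, rfl⟩ := hd
    rcases le_or_gt d 0 with hd₀ | hd₀
    · exact ⟨_, hR 0 (by norm_num), fun u hu => by
        rw [hR₀ u hu]; exact indicator_of_mem (hd₀.trans hu.1 : d ≤ u) _⟩
    rcases le_or_gt d (1/2) with hd₁ | hd₁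
    · refine ⟨(1/2 : ℝ) • (stepLoopTranslate ⟨0, by norm_num⟩ - stepLoopTranslate ⟨1/2 - d,
        by constructor <;> linarith⟩), Submodule.smul_mem _ _ (Submodule.sub_mem _ (hR _ _)
        (hR _ _)), fun u hu => ?_⟩
      have h := stepLoop_eq_ite (x := u + (1/2 - d)) (by linarith [hu.1]) (by linarith [hu.2])
      simp only [Pi.smul_apply, Pi.sub_apply, smul_eq_mul, hR₀ u hu]
      simp only [stepLoopTranslate] at h ⊢
      rw [h]
      simp only [indicator_apply, mem_Ici, Pi.one_apply]
      split_ifs <;> (try norm_num) <;> linarith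
    · exact ⟨0, zero_mem _, fun u hu => indicator_of_notMem (fun h : d ≤ u => by
        linarith [hu.2]) _⟩
  | zero => exact ⟨0, zero_mem _, fun _ _ => rfl⟩
  | add g₁ g₂ _ _ h₁ h₂ =>
    obtain ⟨g₁', hg₁', e₁⟩ := h₁
    obtain ⟨g₂', hg₂', e₂⟩ := h₂
    exact ⟨g₁' + g₂', add_mem hg₁' hg₂', fun u hu => congr_arg₂ (· + ·) (e₁ hu) (e₂ hu)⟩
  | smul r g _ h =>
    obtain ⟨g', hg', e⟩ := h
    exact ⟨r • g', Submodule.smul_mem _ r hg', fun u hu => congr_arg (r * ·) (e hu)⟩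

lemma antiperiodic_of_mem_span_stepLoopTranslate {g : ℝ → ℝ}
    (hg : g ∈ Submodule.span ℝ (range stepLoopTranslate)) : Antiperiodic g (1/2) := by
  induction hg using Submodule.span_induction with
  | mem _ hs => obtain ⟨s, rfl⟩ := hs; exact stepLoop_antiperiodic.add_const s
  | zero => exact fun _ => neg_zero.symm
  | add _ _ _ _ h₁ h₂ => exact fun x => by rw [Pi.add_apply, Pi.add_apply, h₁ x, h₂ x, neg_add]
  | smul r _ _ h => exact h.smul r

lemma isClosed_breaksSet {F : Set ℝ} (hF : F.Finite) : IsClosed (BreaksSet F) := by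
  have : BreaksSet F = ⋃ f ∈ F, range fun k : ℤ => f + k := by
    ext x
    simp only [BreaksSet, mem_iUnion, mem_range, exists_prop]
    exact exists_congr fun f => and_congr_right fun _ => exists_congr fun k => eq_comm
  rw [this]
  exact hF.isClosed_biUnion fun f _ =>
    ((Homeomorph.addLeft f).isClosedEmbedding.comp Int.isClosedEmbedding_coe_real).isClosed_range

lemma mem_of_mem_breaksSet {F : Set ℝ} (hF : F ⊆ Ico 0 1) {x : ℝ} (hx : x ∈ BreaksSet F)
    (hx₁ : x ∈ Ico 0 1) : x ∈ F := by
  obtain ⟨f, hf, k, rfl⟩ := hx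
  rwa [← Int.fract_eq_self.2 hx₁, Int.fract_add_intCast, Int.fract_eq_self.2 (hF hf)]

/-- (a) The translates `{R_tβ₀ : t ∈ [0, 1/2)}` are linearly independent in
the vector space of functions `ℝ → ℝ`.  (b) Every 1-periodic, right-continuous, S¹-odd
function that is locally constant off `F + ℤ` for some finite `F ⊆ [0,1)` is a finite
linear combination `Σ_j ξ_j · R_{t_j}β₀` with distinct `t_j ∈ [0, 1/2)`. -/
theorem stmt19 :
    LinearIndependent ℝ
      (fun s : Set.Ico (0:ℝ) (1/2) => fun u : ℝ => stepLoop (u + (s : ℝ))) ∧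
    (∀ γ : ℝ → ℝ, (∀ u, γ (u + 1) = γ u) →
      (∀ u, ContinuousWithinAt γ (Set.Ici u) u) →
      (∀ u, γ u + γ (u + 1/2) = 0) →
      (∃ F : Set ℝ, F.Finite ∧ F ⊆ Set.Ico 0 1 ∧
        ∀ x ∉ BreaksSet F, ∃ ε : ℝ, 0 < ε ∧
          ∀ y : ℝ, |y - x| < ε → y ∉ BreaksSet F → γ y = γ x) →
      ∃ (m : ℕ) (ts ξ : Fin m → ℝ), Function.Injective ts ∧
        (∀ j, ts j ∈ Set.Ico (0:ℝ) (1/2)) ∧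
        γ = fun u => ∑ j, ξ j * stepLoop (u + ts j)) := by
  refine ⟨linearIndependent_stepLoopTranslate, ?_⟩
  rintro γ - hrc hodd ⟨F, hF, hF₀₁, hloc⟩
  have hlocal : ∀ x ∉ BreaksSet F, ∀ᶠ y in 𝓝 x, γ y = γ x := fun x hx => by
    obtain ⟨ε, hε, h⟩ := hloc x hx
    filter_upwards [(isClosed_breaksSet hF).isOpen_compl.mem_nhds hx, Metric.ball_mem_nhds x hε]
      with y hyF hy
    exact h y (by rwa [Metric.mem_ball, Real.dist_eq] at hy) hyF
  obtain ⟨g₀, hg₀, hγg₀⟩ := exists_mem_span_indicator_Ici_eqOn (a := 0) (b := 1/2)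
    (hF.inter_of_left (Ioo 0 (1/2))).toFinset (by simp) (fun x _ => hrc x)
    fun x hx hxS => hlocal x fun hxF => hxS <| by
      rw [Set.Finite.mem_toFinset]
      exact ⟨mem_of_mem_breaksSet hF₀₁ hxF ⟨hx.1.le, by linarith [hx.2]⟩, hx⟩
  obtain ⟨g, hg, hg₀g⟩ := exists_mem_span_stepLoopTranslate_eqOn hg₀
  have hγg : γ = g := Antiperiodic.eq_of_eqOn_Ico (fun u => eq_neg_of_add_eq_zero_right (hodd u))
    (antiperiodic_of_mem_span_stepLoopTranslate hg) (by norm_num) (hγg₀.trans hg₀g)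
  obtain ⟨m, e, ξ, he, rfl⟩ := Submodule.exists_fin_injective_of_mem_span_range hg
  refine ⟨m, fun j => e j, ξ, Subtype.val_injective.comp he, fun j => (e j).2, ?_⟩
  rw [hγg]
  ext u
  simp [stepLoopTranslate, Finset.sum_apply]
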